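/- Every satisfiable X_a-free lfp-Hyper²LTL_mm sentence has a countable model; in fact, every model T of such a sentence contains a countable subset R ⊆ T that is also a model of the sentence. -/

import Mathlib

namespace Hyper2

/-! ### Traces -/

/-- A trace over atomic propositions `α` is an infinite word over `2^α`. -/
abbrev Trace (α : Type) := ℕ → Set α

/-! ### Second-order (set) variables -/

/-- Second-order variables: the distinguished variable `all` (`Xₐ`, the set of all traces),
the distinguished variable `dis` (`X_d`, the universe of discourse), and named variables. -/
inductive SVar where
  | all : SVar
  | dis : SVar
  | var : ℕ → SVar
deriving DecidableEq

def SVar.code : SVar → ℕ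
  | .all => 0
  | .dis => 1
  | .var n => n + 2

/-! ### Quantifier-free (LTL-like) formulas -/

/-- Quantifier-free formulas: atoms `a_π`, negation, disjunction, next, until. -/
inductive QF (α : Type) where
  | atom : α → ℕ → QF α
  | not : QF α → QF α
  | or : QF α → QF α → QF α
  | next : QF α → QF α
  | untl : QF α → QF α → QF α

variable {α : Type}

/-- Satisfaction of a quantifier-free formula w.r.t. a valuation of trace
variables, at position `i`. -/
def QF.sat (v : ℕ → Trace α) : QF α → ℕ → Prop
  | .atom a π, i => a ∈ v π i
  | .not ψ, i => ¬ QF.sat v ψ i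
  | .or ψ₁ ψ₂, i => QF.sat v ψ₁ i ∨ QF.sat v ψ₂ i
  | .next ψ, i => QF.sat v ψ (i + 1)
  | .untl ψ₁ ψ₂, i => ∃ j, i ≤ j ∧ QF.sat v ψ₂ j ∧ ∀ k, i ≤ k → k < j → QF.sat v ψ₁ k

/-- The trace variables occurring in a quantifier-free formula. -/
def QF.traceVars : QF α → Set ℕ
  | .atom _ π => {π}
  | .not ψ => ψ.traceVars
  | .or ψ₁ ψ₂ => ψ₁.traceVars ∪ ψ₂.traceVars
  | .next ψ => ψ.traceVars
  | .untl ψ₁ ψ₂ => ψ₁.traceVars ∪ ψ₂.traceVars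

/-- The atomic propositions occurring in a quantifier-free formula. -/
def QF.atoms : QF α → Set α
  | .atom a _ => {a}
  | .not ψ => ψ.atoms
  | .or ψ₁ ψ₂ => ψ₁.atoms ∪ ψ₂.atoms
  | .next ψ => ψ.atoms
  | .untl ψ₁ ψ₂ => ψ₁.atoms ∪ ψ₂.atoms

/-- A numerical code for quantifier-free formulas over `AP = ℕ`. -/
def QF.code : QF ℕ → ℕ
  | .atom a π => Nat.pair 0 (Nat.pair a π)
  | .not ψ => Nat.pair 1 ψ.code
  | .or ψ₁ ψ₂ => Nat.pair 2 (Nat.pair ψ₁.code ψ₂.code)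
  | .next ψ => Nat.pair 3 ψ.code
  | .untl ψ₁ ψ₂ => Nat.pair 4 (Nat.pair ψ₁.code ψ₂.code)

/-! ### Variable assignments -/

/-- A variable assignment maps trace variables to traces and
second-order variables to sets of traces. -/
structure Assignment (α : Type) where
  tr : ℕ → Trace α
  so : SVar → Set (Trace α)

/-- Update the value of a trace variable. -/
def Assignment.updTr (Γ : Assignment α) (π : ℕ) (t : Trace α) : Assignment α :=
  { Γ with tr := Function.update Γ.tr π t }

/-- Update the value of a second-order variable. -/
def Assignment.updSo (Γ : Assignment α) (X : SVar) (T : Set (Trace α)) : Assignment α :=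
  { Γ with so := Function.update Γ.so X T }

/-! ### Hyper²LTL -/

/-- Hyper²LTL formulas: a prefix of (unrestricted) second-order quantifiers and
trace quantifiers (ranging over a second-order variable), followed by a
quantifier-free formula. Second-order quantifiers bind named variables. -/
inductive Formula (α : Type) where
  | qf : QF α → Formula α
  | existsSet : ℕ → Formula α → Formula α
  | forallSet : ℕ → Formula α → Formula α
  | existsTrace : ℕ → SVar → Formula α → Formula α
  | forallTrace : ℕ → SVar → Formula α → Formula α

/-- Standard semantics of Hyper²LTL: second-order quantifiers range over
arbitrary sets of traces. -/
def Formula.sat : Formula α → Assignment α → Prop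
  | .qf ψ, Γ => ψ.sat Γ.tr 0
  | .existsSet X φ, Γ => ∃ T : Set (Trace α), Formula.sat φ (Γ.updSo (SVar.var X) T)
  | .forallSet X φ, Γ => ∀ T : Set (Trace α), Formula.sat φ (Γ.updSo (SVar.var X) T)
  | .existsTrace π X φ, Γ => ∃ t ∈ Γ.so X, Formula.sat φ (Γ.updTr π t)
  | .forallTrace π X φ, Γ => ∀ t ∈ Γ.so X, Formula.sat φ (Γ.updTr π t)

/-- Closed-world semantics of Hyper²LTL: second-order quantifiers range only over
subsets of the universe of discourse `X_d`. -/
def Formula.satCW : Formula α → Assignment α → Prop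
  | .qf ψ, Γ => ψ.sat Γ.tr 0
  | .existsSet X φ, Γ =>
      ∃ T : Set (Trace α), T ⊆ Γ.so SVar.dis ∧ Formula.satCW φ (Γ.updSo (SVar.var X) T)
  | .forallSet X φ, Γ =>
      ∀ T : Set (Trace α), T ⊆ Γ.so SVar.dis → Formula.satCW φ (Γ.updSo (SVar.var X) T)
  | .existsTrace π X φ, Γ => ∃ t ∈ Γ.so X, Formula.satCW φ (Γ.updTr π t)
  | .forallTrace π X φ, Γ => ∀ t ∈ Γ.so X, Formula.satCW φ (Γ.updTr π t)

/-- Free trace variables of a Hyper²LTL formula. -/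
def Formula.freeTraceVars : Formula α → Set ℕ
  | .qf ψ => ψ.traceVars
  | .existsSet _ φ => φ.freeTraceVars
  | .forallSet _ φ => φ.freeTraceVars
  | .existsTrace π _ φ => φ.freeTraceVars \ {π}
  | .forallTrace π _ φ => φ.freeTraceVars \ {π}

/-- Free second-order variables of a Hyper²LTL formula. -/
def Formula.freeSetVars : Formula α → Set SVar
  | .qf _ => ∅
  | .existsSet X φ => φ.freeSetVars \ {SVar.var X}
  | .forallSet X φ => φ.freeSetVars \ {SVar.var X}
  | .existsTrace _ X φ => insert X φ.freeSetVars
  | .forallTrace _ X φ => insert X φ.freeSetVars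

/-- A sentence is a formula in which only `Xₐ` and `X_d` may occur free. -/
def Formula.IsSentence (φ : Formula α) : Prop :=
  φ.freeTraceVars = ∅ ∧ φ.freeSetVars ⊆ {SVar.all, SVar.dis}

/-- A formula is `Xₐ`-free if the distinguished variable `Xₐ` is not used. -/
def Formula.XaFree : Formula α → Prop
  | .qf _ => True
  | .existsSet _ φ => φ.XaFree
  | .forallSet _ φ => φ.XaFree
  | .existsTrace _ X φ => X ≠ SVar.all ∧ φ.XaFree
  | .forallTrace _ X φ => X ≠ SVar.all ∧ φ.XaFree

/-- A numerical code for Hyper²LTL formulas over `AP = ℕ`. -/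
def Formula.code : Formula ℕ → ℕ
  | .qf ψ => Nat.pair 0 ψ.code
  | .existsSet X φ => Nat.pair 1 (Nat.pair X φ.code)
  | .forallSet X φ => Nat.pair 2 (Nat.pair X φ.code)
  | .existsTrace π X φ => Nat.pair 3 (Nat.pair π (Nat.pair X.code φ.code))
  | .forallTrace π X φ => Nat.pair 4 (Nat.pair π (Nat.pair X.code φ.code))

/-- The initial assignment for evaluating sentences (standard semantics):
`Xₐ` is the set of all traces, `X_d` is the model `T`. -/
def initAssign (T : Set (Trace α)) : Assignment α :=
  ⟨fun _ => fun _ => ∅, fun X =>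
    match X with
    | SVar.all => Set.univ
    | SVar.dis => T
    | SVar.var _ => ∅⟩

/-- The initial assignment for evaluating `Xₐ`-free sentences under
closed-world semantics: `X_d` is the model `T`. -/
def initAssignCW (T : Set (Trace α)) : Assignment α :=
  ⟨fun _ => fun _ => ∅, fun X =>
    match X with
    | SVar.dis => T
    | _ => ∅⟩

/-- `T ⊨ φ`: the set of traces `T` is a model of `φ` (standard semantics). -/
def Models (T : Set (Trace α)) (φ : Formula α) : Prop := φ.sat (initAssign T)

/-- `T ⊨_cw φ`: the set of traces `T` satisfies `φ` under closed-world semantics. -/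
def ModelsCW (T : Set (Trace α)) (φ : Formula α) : Prop := φ.satCW (initAssignCW T)

/-! ### Finite transition systems -/

/-- A finite transition system over `AP = ℕ`: vertices are `0, …, V-1`,
with an edge list, initial vertices, and a labeling of vertices by (finite)
sets of atomic propositions. -/
structure TS where
  V : ℕ
  E : List (ℕ × ℕ)
  I : List ℕ
  label : List (List ℕ)

/-- Well-formedness of a transition system: edges and initial vertices are in range,
every vertex has an outgoing edge, and every vertex has a label. -/
def TS.WF (𝔗 : TS) : Prop :=
  (∀ e ∈ 𝔗.E, e.1 < 𝔗.V ∧ e.2 < 𝔗.V) ∧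
  (∀ v, v < 𝔗.V → ∃ w, (v, w) ∈ 𝔗.E) ∧
  (∀ v ∈ 𝔗.I, v < 𝔗.V) ∧
  𝔗.label.length = 𝔗.V

/-- The label of a vertex, as a set of atomic propositions. -/
def TS.labelSet (𝔗 : TS) (v : ℕ) : Set ℕ := {a | a ∈ 𝔗.label.getD v []}

/-- Paths through a transition system, starting in an initial vertex. -/
def TS.IsPath (𝔗 : TS) (ρ : ℕ → ℕ) : Prop :=
  ρ 0 ∈ 𝔗.I ∧ ∀ n, (ρ n, ρ (n + 1)) ∈ 𝔗.E

/-- The set of traces of a transition system. -/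
def TS.traces (𝔗 : TS) : Set (Trace ℕ) :=
  {t | ∃ ρ : ℕ → ℕ, 𝔗.IsPath ρ ∧ t = fun n => 𝔗.labelSet (ρ n)}

/-- A numerical code for transition systems. -/
def TS.code (𝔗 : TS) : ℕ :=
  Nat.pair 𝔗.V (Nat.pair (Encodable.encode 𝔗.E)
    (Nat.pair (Encodable.encode 𝔗.I) (Encodable.encode 𝔗.label)))

/-! ### Arithmetic of orders one, two and three -/

/-- First-order terms over the signature `(+, ·)`. -/
inductive Term3 where
  | var : ℕ → Term3
  | plus : Term3 → Term3 → Term3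
  | times : Term3 → Term3 → Term3

def Term3.val (v : ℕ → ℕ) : Term3 → ℕ
  | .var x => v x
  | .plus t u => t.val v + u.val v
  | .times t u => t.val v * u.val v

def Term3.vars : Term3 → Set ℕ
  | .var x => {x}
  | .plus t u => t.vars ∪ u.vars
  | .times t u => t.vars ∪ u.vars

def Term3.code : Term3 → ℕ
  | .var x => Nat.pair 0 x
  | .plus t u => Nat.pair 1 (Nat.pair t.code u.code)
  | .times t u => Nat.pair 2 (Nat.pair t.code u.code)

/-- Formulas of third-order arithmetic over the signature `(+, ·, <, ∈)`, with
quantification over natural numbers (type 0), sets of natural numbers (type 1),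
and sets of sets of natural numbers (type 2). -/
inductive Form3 where
  | lt : Term3 → Term3 → Form3
  | mem1 : Term3 → ℕ → Form3
  | mem2 : ℕ → ℕ → Form3
  | not : Form3 → Form3
  | or : Form3 → Form3 → Form3
  | ex0 : ℕ → Form3 → Form3
  | all0 : ℕ → Form3 → Form3
  | ex1 : ℕ → Form3 → Form3
  | all1 : ℕ → Form3 → Form3
  | ex2 : ℕ → Form3 → Form3
  | all2 : ℕ → Form3 → Form3

/-- Satisfaction of third-order arithmetic over the standard structure `(ℕ, +, ·, <, ∈)`,
w.r.t. valuations of first-, second- and third-order variables. -/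
def Form3.Sat : (ℕ → ℕ) → (ℕ → Set ℕ) → (ℕ → Set (Set ℕ)) → Form3 → Prop
  | v0, _, _, .lt t u => t.val v0 < u.val v0
  | v0, v1, _, .mem1 t X => t.val v0 ∈ v1 X
  | _, v1, v2, .mem2 X Y => v1 X ∈ v2 Y
  | v0, v1, v2, .not φ => ¬ Form3.Sat v0 v1 v2 φ
  | v0, v1, v2, .or φ ψ => Form3.Sat v0 v1 v2 φ ∨ Form3.Sat v0 v1 v2 ψ
  | v0, v1, v2, .ex0 x φ => ∃ n : ℕ, Form3.Sat (Function.update v0 x n) v1 v2 φ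
  | v0, v1, v2, .all0 x φ => ∀ n : ℕ, Form3.Sat (Function.update v0 x n) v1 v2 φ
  | v0, v1, v2, .ex1 X φ => ∃ S : Set ℕ, Form3.Sat v0 (Function.update v1 X S) v2 φ
  | v0, v1, v2, .all1 X φ => ∀ S : Set ℕ, Form3.Sat v0 (Function.update v1 X S) v2 φ
  | v0, v1, v2, .ex2 X φ => ∃ S : Set (Set ℕ), Form3.Sat v0 v1 (Function.update v2 X S) φ
  | v0, v1, v2, .all2 X φ => ∀ S : Set (Set ℕ), Form3.Sat v0 v1 (Function.update v2 X S) φ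

def Form3.free0 : Form3 → Set ℕ
  | .lt t u => t.vars ∪ u.vars
  | .mem1 t _ => t.vars
  | .mem2 _ _ => ∅
  | .not φ => φ.free0
  | .or φ ψ => φ.free0 ∪ ψ.free0
  | .ex0 x φ => φ.free0 \ {x}
  | .all0 x φ => φ.free0 \ {x}
  | .ex1 _ φ => φ.free0
  | .all1 _ φ => φ.free0
  | .ex2 _ φ => φ.free0
  | .all2 _ φ => φ.free0

def Form3.free1 : Form3 → Set ℕ
  | .lt _ _ => ∅
  | .mem1 _ X => {X}
  | .mem2 X _ => {X}
  | .not φ => φ.free1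
  | .or φ ψ => φ.free1 ∪ ψ.free1
  | .ex0 _ φ => φ.free1
  | .all0 _ φ => φ.free1
  | .ex1 X φ => φ.free1 \ {X}
  | .all1 X φ => φ.free1 \ {X}
  | .ex2 _ φ => φ.free1
  | .all2 _ φ => φ.free1

def Form3.free2 : Form3 → Set ℕ
  | .lt _ _ => ∅
  | .mem1 _ _ => ∅
  | .mem2 _ Y => {Y}
  | .not φ => φ.free2
  | .or φ ψ => φ.free2 ∪ ψ.free2
  | .ex0 _ φ => φ.free2
  | .all0 _ φ => φ.free2
  | .ex1 _ φ => φ.free2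
  | .all1 _ φ => φ.free2
  | .ex2 X φ => φ.free2 \ {X}
  | .all2 X φ => φ.free2 \ {X}

/-- Sentences of (third-order) arithmetic: no free variables of any order. -/
def Form3.IsSentence (φ : Form3) : Prop :=
  φ.free0 = ∅ ∧ φ.free1 = ∅ ∧ φ.free2 = ∅

/-- Truth of a formula of arithmetic in `(ℕ, +, ·, <, ∈)` (under default valuations;
for sentences the valuations are irrelevant). -/
def Form3.Holds (φ : Form3) : Prop :=
  φ.Sat (fun _ => 0) (fun _ => ∅) (fun _ => ∅)

/-- Formulas of second-order arithmetic: no third-order variables or quantifiers. -/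
def Form3.SecondOrder : Form3 → Prop
  | .lt _ _ => True
  | .mem1 _ _ => True
  | .mem2 _ _ => False
  | .not φ => φ.SecondOrder
  | .or φ ψ => φ.SecondOrder ∧ ψ.SecondOrder
  | .ex0 _ φ => φ.SecondOrder
  | .all0 _ φ => φ.SecondOrder
  | .ex1 _ φ => φ.SecondOrder
  | .all1 _ φ => φ.SecondOrder
  | .ex2 _ _ => False
  | .all2 _ _ => False

/-- First-order formulas: arbitrary quantification over numbers, no set quantifiers
(free second-order variables are allowed). -/
def Form3.FirstOrderMatrix : Form3 → Prop
  | .lt _ _ => True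
  | .mem1 _ _ => True
  | .mem2 _ _ => False
  | .not φ => φ.FirstOrderMatrix
  | .or φ ψ => φ.FirstOrderMatrix ∧ ψ.FirstOrderMatrix
  | .ex0 _ φ => φ.FirstOrderMatrix
  | .all0 _ φ => φ.FirstOrderMatrix
  | .ex1 _ _ => False
  | .all1 _ _ => False
  | .ex2 _ _ => False
  | .all2 _ _ => False

/-- Formulas with arbitrary quantification over type-0 and type-1 objects but no
third-order quantifiers (free third-order variables are allowed). -/
def Form3.NoThirdQuant : Form3 → Prop
  | .lt _ _ => True
  | .mem1 _ _ => True
  | .mem2 _ _ => True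
  | .not φ => φ.NoThirdQuant
  | .or φ ψ => φ.NoThirdQuant ∧ ψ.NoThirdQuant
  | .ex0 _ φ => φ.NoThirdQuant
  | .all0 _ φ => φ.NoThirdQuant
  | .ex1 _ φ => φ.NoThirdQuant
  | .all1 _ φ => φ.NoThirdQuant
  | .ex2 _ _ => False
  | .all2 _ _ => False

/-- Σ¹₁-formulas: a block of existential second-order quantifiers followed by a
first-order matrix. -/
inductive Form3.IsSigma11 : Form3 → Prop
  | base (φ : Form3) : φ.FirstOrderMatrix → Form3.IsSigma11 φ
  | step (X : ℕ) (φ : Form3) : Form3.IsSigma11 φ → Form3.IsSigma11 (Form3.ex1 X φ)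

/-- Σ²₁-formulas: a block of existential third-order quantifiers followed by a matrix
with arbitrary type-0 and type-1 quantification. -/
inductive Form3.IsSigma21 : Form3 → Prop
  | base (φ : Form3) : φ.NoThirdQuant → Form3.IsSigma21 φ
  | step (X : ℕ) (φ : Form3) : Form3.IsSigma21 φ → Form3.IsSigma21 (Form3.ex2 X φ)

/-- The class Σ¹₁ of sets of natural numbers. -/
def InSigma11 (A : Set ℕ) : Prop :=
  ∃ φ : Form3, φ.IsSigma11 ∧ φ.free0 ⊆ {0} ∧ φ.free1 = ∅ ∧ φ.free2 = ∅ ∧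
    ∀ n : ℕ, n ∈ A ↔ φ.Sat (Function.update (fun _ => 0) 0 n) (fun _ => ∅) (fun _ => ∅)

/-- The class Σ²₁ of sets of natural numbers. -/
def InSigma21 (A : Set ℕ) : Prop :=
  ∃ φ : Form3, φ.IsSigma21 ∧ φ.free0 ⊆ {0} ∧ φ.free1 = ∅ ∧ φ.free2 = ∅ ∧
    ∀ n : ℕ, n ∈ A ↔ φ.Sat (Function.update (fun _ => 0) 0 n) (fun _ => ∅) (fun _ => ∅)

def Form3.code : Form3 → ℕ
  | .lt t u => Nat.pair 0 (Nat.pair t.code u.code)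
  | .mem1 t X => Nat.pair 1 (Nat.pair t.code X)
  | .mem2 X Y => Nat.pair 2 (Nat.pair X Y)
  | .not φ => Nat.pair 3 φ.code
  | .or φ ψ => Nat.pair 4 (Nat.pair φ.code ψ.code)
  | .ex0 x φ => Nat.pair 5 (Nat.pair x φ.code)
  | .all0 x φ => Nat.pair 6 (Nat.pair x φ.code)
  | .ex1 X φ => Nat.pair 7 (Nat.pair X φ.code)
  | .all1 X φ => Nat.pair 8 (Nat.pair X φ.code)
  | .ex2 X φ => Nat.pair 9 (Nat.pair X φ.code)
  | .all2 X φ => Nat.pair 10 (Nat.pair X φ.code)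

/-- The decision problem "truth in third-order arithmetic". -/
def ThirdOrderTruth : Set Form3 := {φ | φ.IsSentence ∧ φ.Holds}

/-- The decision problem "truth in second-order arithmetic". -/
def SecondOrderTruth : Set Form3 := {φ | φ.SecondOrder ∧ φ.IsSentence ∧ φ.Holds}

/-! ### Polynomial-time reductions -/

/-- A function on natural numbers is polynomial-time computable if it is computable
in polynomial time by a two-stack Turing machine w.r.t. the standard binary encoding. -/
def PolyTimeComputable (f : ℕ → ℕ) : Prop :=
  Nonempty (Turing.TM2ComputableInPolyTime Computability.encodingNatBool.encode
    Computability.encodingNatBool.encode f)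

/-- `A` many-one reduces to `B` in polynomial time (problem instances are coded
into `ℕ` via `cα`, `cβ`): there is a map `g` on instances, implemented by a
polynomial-time computable function on codes, such that `x ∈ A ↔ g x ∈ B`. -/
def PolyTimeReducible {σ τ : Type} (cα : σ → ℕ) (cβ : τ → ℕ) (A : Set σ) (B : Set τ) : Prop :=
  ∃ (g : σ → τ) (f : ℕ → ℕ), PolyTimeComputable f ∧
    (∀ x, f (cα x) = cβ (g x)) ∧ ∀ x, x ∈ A ↔ g x ∈ B

/-- Two decision problems are polynomial-time equivalent if each reduces to the
other in polynomial time. -/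
def PolyTimeEquivalent {σ τ : Type} (cα : σ → ℕ) (cβ : τ → ℕ) (A : Set σ) (B : Set τ) : Prop :=
  PolyTimeReducible cα cβ A B ∧ PolyTimeReducible cβ cα B A

/-! ### Hyper²LTL decision problems -/

def H2SAT : Set (Formula ℕ) := {φ | φ.IsSentence ∧ ∃ T : Set (Trace ℕ), Models T φ}

def H2SATcw : Set (Formula ℕ) :=
  {φ | φ.IsSentence ∧ φ.XaFree ∧ ∃ T : Set (Trace ℕ), ModelsCW T φ}

def H2FinSAT : Set (Formula ℕ) := {φ | φ.IsSentence ∧ ∃ 𝔗 : TS, 𝔗.WF ∧ Models 𝔗.traces φ}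

def H2FinSATcw : Set (Formula ℕ) :=
  {φ | φ.IsSentence ∧ φ.XaFree ∧ ∃ 𝔗 : TS, 𝔗.WF ∧ ModelsCW 𝔗.traces φ}

def H2MC : Set (TS × Formula ℕ) := {p | p.1.WF ∧ p.2.IsSentence ∧ Models p.1.traces p.2}

def H2MCcw : Set (TS × Formula ℕ) :=
  {p | p.1.WF ∧ p.2.IsSentence ∧ p.2.XaFree ∧ ModelsCW p.1.traces p.2}

/-- Coding of model-checking instances. -/
def mcCode (p : TS × Formula ℕ) : ℕ := Nat.pair p.1.code p.2.code

/-! ### Hyper²LTL_mm : minimality/maximality-guarded second-order quantifiers -/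

inductive MinMax where
  | min : MinMax
  | max : MinMax
deriving DecidableEq

def MinMax.code : MinMax → ℕ
  | .min => 0
  | .max => 1

/-- Hyper²LTL_mm formulas: second-order quantifiers are guarded and range over
minimal (⋎) resp. maximal (⋏) sets satisfying the guard. -/
inductive MMFormula (α : Type) where
  | qf : QF α → MMFormula α
  | existsSetG : ℕ → MinMax → MMFormula α → MMFormula α → MMFormula α
  | forallSetG : ℕ → MinMax → MMFormula α → MMFormula α → MMFormula α
  | existsTrace : ℕ → SVar → MMFormula α → MMFormula α
  | forallTrace : ℕ → SVar → MMFormula α → MMFormula α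

/-- Minimal/maximal solutions of a guard predicate (standard semantics). -/
def IsSol (P : Set (Trace α) → Prop) : MinMax → Set (Trace α) → Prop
  | .min, T => P T ∧ ∀ T', T' ⊂ T → ¬ P T'
  | .max, T => P T ∧ ∀ T', T ⊂ T' → ¬ P T'

/-- Minimal/maximal solutions among subsets of the universe of discourse `D`
(closed-world semantics). -/
def IsSolCW (D : Set (Trace α)) (P : Set (Trace α) → Prop) : MinMax → Set (Trace α) → Prop
  | .min, T => T ⊆ D ∧ P T ∧ ∀ T', T' ⊂ T → ¬ P T'
  | .max, T => T ⊆ D ∧ P T ∧ ∀ T', T ⊂ T' → T' ⊆ D → ¬ P T'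

/-- Standard semantics of Hyper²LTL_mm. -/
def MMFormula.sat : MMFormula α → Assignment α → Prop
  | .qf ψ, Γ => ψ.sat Γ.tr 0
  | .existsSetG X mm g b, Γ =>
      ∃ T, IsSol (fun T' => MMFormula.sat g (Γ.updSo (SVar.var X) T')) mm T ∧
        MMFormula.sat b (Γ.updSo (SVar.var X) T)
  | .forallSetG X mm g b, Γ =>
      ∀ T, IsSol (fun T' => MMFormula.sat g (Γ.updSo (SVar.var X) T')) mm T →
        MMFormula.sat b (Γ.updSo (SVar.var X) T)
  | .existsTrace π X φ, Γ => ∃ t ∈ Γ.so X, MMFormula.sat φ (Γ.updTr π t)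
  | .forallTrace π X φ, Γ => ∀ t ∈ Γ.so X, MMFormula.sat φ (Γ.updTr π t)

/-- Closed-world semantics of Hyper²LTL_mm. -/
def MMFormula.satCW : MMFormula α → Assignment α → Prop
  | .qf ψ, Γ => ψ.sat Γ.tr 0
  | .existsSetG X mm g b, Γ =>
      ∃ T, IsSolCW (Γ.so SVar.dis) (fun T' => MMFormula.satCW g (Γ.updSo (SVar.var X) T')) mm T ∧
        MMFormula.satCW b (Γ.updSo (SVar.var X) T)
  | .forallSetG X mm g b, Γ =>
      ∀ T, IsSolCW (Γ.so SVar.dis) (fun T' => MMFormula.satCW g (Γ.updSo (SVar.var X) T')) mm T →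
        MMFormula.satCW b (Γ.updSo (SVar.var X) T)
  | .existsTrace π X φ, Γ => ∃ t ∈ Γ.so X, MMFormula.satCW φ (Γ.updTr π t)
  | .forallTrace π X φ, Γ => ∀ t ∈ Γ.so X, MMFormula.satCW φ (Γ.updTr π t)

def MMFormula.freeTraceVars : MMFormula α → Set ℕ
  | .qf ψ => ψ.traceVars
  | .existsSetG _ _ g b => g.freeTraceVars ∪ b.freeTraceVars
  | .forallSetG _ _ g b => g.freeTraceVars ∪ b.freeTraceVars
  | .existsTrace π _ φ => φ.freeTraceVars \ {π}
  | .forallTrace π _ φ => φ.freeTraceVars \ {π}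

def MMFormula.freeSetVars : MMFormula α → Set SVar
  | .qf _ => ∅
  | .existsSetG X _ g b => (g.freeSetVars ∪ b.freeSetVars) \ {SVar.var X}
  | .forallSetG X _ g b => (g.freeSetVars ∪ b.freeSetVars) \ {SVar.var X}
  | .existsTrace _ X φ => insert X φ.freeSetVars
  | .forallTrace _ X φ => insert X φ.freeSetVars

def MMFormula.IsSentence (φ : MMFormula α) : Prop :=
  φ.freeTraceVars = ∅ ∧ φ.freeSetVars ⊆ {SVar.all, SVar.dis}

def MMFormula.XaFree : MMFormula α → Prop
  | .qf _ => True
  | .existsSetG _ _ g b => g.XaFree ∧ b.XaFree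
  | .forallSetG _ _ g b => g.XaFree ∧ b.XaFree
  | .existsTrace _ X φ => X ≠ SVar.all ∧ φ.XaFree
  | .forallTrace _ X φ => X ≠ SVar.all ∧ φ.XaFree

/-- The fragment Hyper²LTL_mm^⋏: only maximality-guarded second-order quantifiers. -/
def MMFormula.OnlyMax : MMFormula α → Prop
  | .qf _ => True
  | .existsSetG _ mm g b => mm = MinMax.max ∧ g.OnlyMax ∧ b.OnlyMax
  | .forallSetG _ mm g b => mm = MinMax.max ∧ g.OnlyMax ∧ b.OnlyMax
  | .existsTrace _ _ φ => φ.OnlyMax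
  | .forallTrace _ _ φ => φ.OnlyMax

/-- The fragment Hyper²LTL_mm^⋎: only minimality-guarded second-order quantifiers. -/
def MMFormula.OnlyMin : MMFormula α → Prop
  | .qf _ => True
  | .existsSetG _ mm g b => mm = MinMax.min ∧ g.OnlyMin ∧ b.OnlyMin
  | .forallSetG _ mm g b => mm = MinMax.min ∧ g.OnlyMin ∧ b.OnlyMin
  | .existsTrace _ _ φ => φ.OnlyMin
  | .forallTrace _ _ φ => φ.OnlyMin

def MMFormula.atoms : MMFormula α → Set α
  | .qf ψ => ψ.atoms
  | .existsSetG _ _ g b => g.atoms ∪ b.atoms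
  | .forallSetG _ _ g b => g.atoms ∪ b.atoms
  | .existsTrace _ _ φ => φ.atoms
  | .forallTrace _ _ φ => φ.atoms

def MMFormula.code : MMFormula ℕ → ℕ
  | .qf ψ => Nat.pair 0 ψ.code
  | .existsSetG X mm g b => Nat.pair 1 (Nat.pair X (Nat.pair mm.code (Nat.pair g.code b.code)))
  | .forallSetG X mm g b => Nat.pair 2 (Nat.pair X (Nat.pair mm.code (Nat.pair g.code b.code)))
  | .existsTrace π X φ => Nat.pair 3 (Nat.pair π (Nat.pair X.code φ.code))
  | .forallTrace π X φ => Nat.pair 4 (Nat.pair π (Nat.pair X.code φ.code))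

def MMModels (T : Set (Trace α)) (φ : MMFormula α) : Prop := φ.sat (initAssign T)

def MMModelsCW (T : Set (Trace α)) (φ : MMFormula α) : Prop := φ.satCW (initAssignCW T)

/-! ### lfp-Hyper²LTL_mm : quantification over least fixed points -/

/-- A guard `φ^con = π̇₁ ▷ Y ∧ ⋯ ∧ π̇ₙ ▷ Y ∧ ∀π̈₁ ∈ Z₁.⋯∀π̈_{n'} ∈ Z_{n'}. (ψ^step → π̈_m ▷ Y)`
for a least-fixed-point second-order quantifier. -/
structure LfpGuard (α : Type) where
  nSeeds : ℕ
  seed : Fin nSeeds → ℕ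
  nUniv : ℕ
  univVar : Fin nUniv → ℕ
  univRange : Fin nUniv → SVar
  target : Fin nUniv
  step : QF α

/-- The monotone operator on sets of traces induced by a guard (for the
second-order variable `Y`, w.r.t. the assignment `Γ`). -/
def LfpGuard.op (g : LfpGuard α) (Y : ℕ) (Γ : Assignment α) (S : Set (Trace α)) :
    Set (Trace α) :=
  S ∪ {t | ∃ i : Fin g.nSeeds, t = Γ.tr (g.seed i)} ∪
    {t | ∃ ts : Fin g.nUniv → Trace α,
      (∀ i, ts i ∈ (if g.univRange i = SVar.var Y then S else Γ.so (g.univRange i))) ∧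
      g.step.sat
        ((List.ofFn fun i => (g.univVar i, ts i)).foldr
          (fun p w => Function.update w p.1 p.2) Γ.tr) 0 ∧
      t = ts g.target}

/-- The least fixed point of the operator induced by a guard. -/
def LfpGuard.lfp (g : LfpGuard α) (Y : ℕ) (Γ : Assignment α) : Set (Trace α) :=
  ⋃ n : ℕ, (g.op Y Γ)^[n] ∅

/-- The trace variables occurring free in a guard. -/
def LfpGuard.freeTraceVars (g : LfpGuard α) : Set ℕ :=
  {π | ∃ i, g.seed i = π} ∪ (g.step.traceVars \ {π | ∃ i, g.univVar i = π})

def LfpGuard.code (g : LfpGuard ℕ) : ℕ :=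
  Nat.pair (Encodable.encode (List.ofFn g.seed))
    (Nat.pair (Encodable.encode (List.ofFn g.univVar))
      (Nat.pair (Encodable.encode (List.ofFn fun i => SVar.code (g.univRange i)))
        (Nat.pair g.target.val g.step.code)))

/-- lfp-Hyper²LTL_mm formulas: blocks of trace quantifiers and least-fixed-point
second-order quantifiers, followed by a quantifier-free formula. (Since every guard has
a unique minimal solution, existential and universal second-order quantification
coincide and are represented by the single constructor `fix`.) -/
inductive LfpFormula (α : Type) where
  | qf : QF α → LfpFormula α
  | existsTrace : ℕ → SVar → LfpFormula α → LfpFormula α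
  | forallTrace : ℕ → SVar → LfpFormula α → LfpFormula α
  | fix : ℕ → LfpGuard α → LfpFormula α → LfpFormula α

def LfpFormula.sat : LfpFormula α → Assignment α → Prop
  | .qf ψ, Γ => ψ.sat Γ.tr 0
  | .existsTrace π X φ, Γ => ∃ t ∈ Γ.so X, LfpFormula.sat φ (Γ.updTr π t)
  | .forallTrace π X φ, Γ => ∀ t ∈ Γ.so X, LfpFormula.sat φ (Γ.updTr π t)
  | .fix Y g φ, Γ => LfpFormula.sat φ (Γ.updSo (SVar.var Y) (g.lfp Y Γ))

/-- Scoping: trace quantifiers and guards only refer to second-order variables that are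
in scope (`Xₐ`, `X_d`, and the previously introduced fixed-point variables). -/
def LfpFormula.ScopeOK : LfpFormula α → Set SVar → Prop
  | .qf _, _ => True
  | .existsTrace _ X φ, A => X ∈ A ∧ LfpFormula.ScopeOK φ A
  | .forallTrace _ X φ, A => X ∈ A ∧ LfpFormula.ScopeOK φ A
  | .fix Y g φ, A => (∀ i, g.univRange i ∈ insert (SVar.var Y) A) ∧
      LfpFormula.ScopeOK φ (insert (SVar.var Y) A)

def LfpFormula.freeTraceVars : LfpFormula α → Set ℕ
  | .qf ψ => ψ.traceVars
  | .existsTrace π _ φ => φ.freeTraceVars \ {π}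
  | .forallTrace π _ φ => φ.freeTraceVars \ {π}
  | .fix _ g φ => g.freeTraceVars ∪ φ.freeTraceVars

def LfpFormula.IsSentence (φ : LfpFormula α) : Prop :=
  φ.freeTraceVars = ∅ ∧ φ.ScopeOK {SVar.all, SVar.dis}

def LfpFormula.XaFree : LfpFormula α → Prop
  | .qf _ => True
  | .existsTrace _ X φ => X ≠ SVar.all ∧ φ.XaFree
  | .forallTrace _ X φ => X ≠ SVar.all ∧ φ.XaFree
  | .fix _ g φ => (∀ i, g.univRange i ≠ SVar.all) ∧ φ.XaFree

def LfpFormula.code : LfpFormula ℕ → ℕ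
  | .qf ψ => Nat.pair 0 ψ.code
  | .existsTrace π X φ => Nat.pair 1 (Nat.pair π (Nat.pair X.code φ.code))
  | .forallTrace π X φ => Nat.pair 2 (Nat.pair π (Nat.pair X.code φ.code))
  | .fix Y g φ => Nat.pair 3 (Nat.pair Y (Nat.pair g.code φ.code))

def LfpModels (T : Set (Trace α)) (φ : LfpFormula α) : Prop := φ.sat (initAssign T)


/-! Downward Löwenheim–Skolem. Given a model `T`, close a countable set `H` of traces under
Skolem functions of `T`: witnesses of the existential trace quantifiers, and for each trace of a
least fixed point and each stage, a derivation of it by the guard's step rule from that stage.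
As the sentence never quantifies over `Xₐ`, evaluating it in `T ∩ H` intersects every
second-order value with `H`; the derivations in `H` show that this commutes with every stage of a
least fixed point, so `T ∩ H` satisfies the sentence along with `T`. The Skolem functions are
indexed by the positions of the quantifier prefix and take the traces bound so far. -/

section SkolemHull

variable {β : Type} (F : List β → Set β)

def closureStage : ℕ → Set β
  | 0 => ∅
  | n + 1 => closureStage n ∪ ⋃ l ∈ {l : List β | ∀ x ∈ l, x ∈ closureStage n}, F l

lemma monotone_closureStage : Monotone (closureStage F) :=
  monotone_nat_of_le_succ fun _ => Set.subset_union_left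

lemma countable_closureStage (hF : ∀ l, (F l).Countable) (n : ℕ) :
    (closureStage F n).Countable := by
  induction n with
  | zero => exact Set.countable_empty
  | succ n ih =>
    have : Countable (closureStage F n) := ih.to_subtype
    refine ih.union (Set.Countable.biUnion ?_ fun l _ => hF l)
    rw [← Set.range_list_map_coe]
    exact Set.countable_range _

theorem exists_countable_closed (hF : ∀ l, (F l).Countable) :
    ∃ H : Set β, H.Countable ∧ ∀ l : List β, (∀ x ∈ l, x ∈ H) → F l ⊆ H := by
  classical
  refine ⟨⋃ n, closureStage F n, Set.countable_iUnion (countable_closureStage F hF),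
    fun l hl => ?_⟩
  obtain ⟨n, hn⟩ :=
    (monotone_closureStage F).directed_le.exists_mem_subset_of_finset_subset_biUnion
      (s := l.toFinset) (by simpa [Set.subset_def] using hl)
  refine Set.subset_iUnion_of_subset (n + 1) (Set.subset_union_of_subset_right ?_ _)
  exact Set.subset_biUnion_of_mem (u := F) (by simpa [Set.subset_def] using hn)

end SkolemHull

/-- `Γ'` is the assignment `Γ` evaluated inside the submodel `H`; `Xₐ` is exempt, as it denotes
all traces on both sides. -/
structure IsRestriction (H : Set (Trace α)) (Γ Γ' : Assignment α) : Prop where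
  tr_eq : Γ'.tr = Γ.tr
  tr_mem : ∀ π, Γ.tr π ∈ H
  so_eq : ∀ X, X ≠ SVar.all → Γ'.so X = Γ.so X ∩ H

namespace IsRestriction

variable {H : Set (Trace α)} {Γ Γ' : Assignment α}

lemma initAssign {T : Set (Trace α)} (h : (fun _ => ∅ : Trace α) ∈ H) :
    IsRestriction H (initAssign T) (initAssign (T ∩ H)) where
  tr_eq := rfl
  tr_mem _ := h
  so_eq
    | .all, h => absurd rfl h
    | .dis, _ => rfl
    | .var _, _ => (Set.empty_inter H).symm

lemma updTr (h : IsRestriction H Γ Γ') (π : ℕ) {t : Trace α} (ht : t ∈ H) :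
    IsRestriction H (Γ.updTr π t) (Γ'.updTr π t) where
  tr_eq := by simp only [Assignment.updTr, h.tr_eq]
  tr_mem π' := by
    rcases eq_or_ne π' π with rfl | hne
    · simpa [Assignment.updTr] using ht
    · simpa [Assignment.updTr, hne] using h.tr_mem π'
  so_eq := h.so_eq

lemma updSo (h : IsRestriction H Γ Γ') (Y : ℕ) {S S' : Set (Trace α)} (hS : S' = S ∩ H) :
    IsRestriction H (Γ.updSo (.var Y) S) (Γ'.updSo (.var Y) S') where
  tr_eq := h.tr_eq
  tr_mem := h.tr_mem
  so_eq X hX := by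
    rcases eq_or_ne X (.var Y) with rfl | hne
    · simpa [Assignment.updSo] using hS
    · simpa [Assignment.updSo, hne] using h.so_eq X hX

end IsRestriction

namespace LfpGuard

variable (g : LfpGuard α) (Y : ℕ)

def IsDerivation (Γ : Assignment α) (S : Set (Trace α)) (ts : Fin g.nUniv → Trace α) : Prop :=
  (∀ i, ts i ∈ (if g.univRange i = SVar.var Y then S else Γ.so (g.univRange i))) ∧
  g.step.sat ((List.ofFn fun i => (g.univVar i, ts i)).foldr
    (fun p w => Function.update w p.1 p.2) Γ.tr) 0

lemma mem_op {Γ : Assignment α} {S : Set (Trace α)} {t : Trace α} :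
    t ∈ g.op Y Γ S ↔ t ∈ S ∨ (∃ i, t = Γ.tr (g.seed i)) ∨
      ∃ ts, g.IsDerivation Y Γ S ts ∧ t = ts g.target := by
  simp only [op, IsDerivation, Set.mem_union, Set.mem_ofPred_eq, or_assoc, and_assoc]

variable {g Y} {H : Set (Trace α)} {Γ Γ' : Assignment α}

lemma isDerivation_inter_iff (h : IsRestriction H Γ Γ') (hXa : ∀ i, g.univRange i ≠ .all)
    {S : Set (Trace α)} {ts : Fin g.nUniv → Trace α} :
    g.IsDerivation Y Γ' (S ∩ H) ts ↔ g.IsDerivation Y Γ S ts ∧ ∀ i, ts i ∈ H := by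
  have hmem : ∀ i,
      ts i ∈ (if g.univRange i = .var Y then S ∩ H else Γ'.so (g.univRange i)) ↔
      ts i ∈ (if g.univRange i = .var Y then S else Γ.so (g.univRange i)) ∧ ts i ∈ H := by
    intro i
    split_ifs
    · rfl
    · rw [h.so_eq _ (hXa i)]
      rfl
  simp only [IsDerivation, hmem, forall_and, h.tr_eq]
  tauto

lemma op_inter (h : IsRestriction H Γ Γ') (hXa : ∀ i, g.univRange i ≠ .all)
    {S : Set (Trace α)}
    (hder : ∀ ts, g.IsDerivation Y Γ S ts → ts g.target ∈ H →
      ∃ ts', g.IsDerivation Y Γ S ts' ∧ (∀ i, ts' i ∈ H) ∧ ts' g.target = ts g.target) :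
    g.op Y Γ' (S ∩ H) = g.op Y Γ S ∩ H := by
  ext t
  simp only [Set.mem_inter_iff, mem_op, isDerivation_inter_iff h hXa, h.tr_eq]
  constructor
  · rintro (⟨hS, hH⟩ | ⟨i, rfl⟩ | ⟨ts, ⟨hts, hH⟩, rfl⟩)
    · exact ⟨.inl hS, hH⟩
    · exact ⟨.inr (.inl ⟨i, rfl⟩), h.tr_mem _⟩
    · exact ⟨.inr (.inr ⟨ts, hts, rfl⟩), hH _⟩
  · rintro ⟨hS | hseed | ⟨ts, hts, rfl⟩, hH⟩
    · exact .inl ⟨hS, hH⟩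
    · exact .inr (.inl hseed)
    · obtain ⟨ts', hts', hH', htarget⟩ := hder ts hts hH
      exact .inr (.inr ⟨ts', ⟨hts', hH'⟩, htarget.symm⟩)

lemma lfp_inter (h : IsRestriction H Γ Γ') (hXa : ∀ i, g.univRange i ≠ .all)
    (hder : ∀ m ts, g.IsDerivation Y Γ ((g.op Y Γ)^[m] ∅) ts → ts g.target ∈ H →
      ∃ ts', g.IsDerivation Y Γ ((g.op Y Γ)^[m] ∅) ts' ∧ (∀ i, ts' i ∈ H) ∧
        ts' g.target = ts g.target) :
    g.lfp Y Γ' = g.lfp Y Γ ∩ H := by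
  have hstage : ∀ m, (g.op Y Γ')^[m] ∅ = (g.op Y Γ)^[m] ∅ ∩ H := by
    intro m
    induction m with
    | zero => exact (Set.empty_inter H).symm
    | succ m ih =>
      rw [Function.iterate_succ_apply', Function.iterate_succ_apply', ih]
      exact op_inter h hXa (hder m)
  simp only [lfp, hstage, Set.iUnion_inter]

end LfpGuard

/-- The quantifiers passed on the way from a sentence down to one of its subformulas,
innermost first. -/
inductive Prefix (α : Type) where
  | nil : Prefix α
  | trace : ℕ → Prefix α → Prefix α
  | fix : ℕ → LfpGuard α → Prefix α → Prefix α

/-- The list supplies the traces bound by the trace quantifiers of the prefix, innermost first. -/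
def Prefix.assign (Γ : Assignment α) : Prefix α → List (Trace α) → Assignment α
  | .nil, _ => Γ
  | .trace π p, t :: l => (p.assign Γ l).updTr π t
  | .trace _ p, [] => p.assign Γ []
  | .fix Y g p, l => (p.assign Γ l).updSo (.var Y) (g.lfp Y (p.assign Γ l))

def Prefix.descend : Prefix α × LfpFormula α → Prefix α × LfpFormula α
  | (p, .existsTrace π _ ψ) => (.trace π p, ψ)
  | (p, .forallTrace π _ ψ) => (.trace π p, ψ)
  | (p, .fix Y g ψ) => (.fix Y g p, ψ)
  | s => s

def LfpFormula.IsPosition (φ : LfpFormula α) (s : Prefix α × LfpFormula α) : Prop :=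
  ∃ n, Prefix.descend^[n] (.nil, φ) = s

lemma LfpFormula.IsPosition.descend {φ : LfpFormula α} {s : Prefix α × LfpFormula α}
    (h : φ.IsPosition s) : φ.IsPosition (Prefix.descend s) := by
  obtain ⟨n, rfl⟩ := h
  exact ⟨n + 1, Function.iterate_succ_apply' _ _ _⟩

/-- For a fixed point, the head `t` of the list is the trace to be derived. -/
noncomputable def positionWitnesses (T : Set (Trace α)) :
    Prefix α × LfpFormula α → List (Trace α) → Set (Trace α)
  | (p, .existsTrace π X ψ), l =>
    let Γ := p.assign (initAssign T) l
    {Classical.epsilon fun t => t ∈ Γ.so X ∧ ψ.sat (Γ.updTr π t)}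
  | (p, .fix Y g _), t :: l =>
    let Γ := p.assign (initAssign T) l
    ⋃ m, Set.range
      (Classical.epsilon fun ts => g.IsDerivation Y Γ ((g.op Y Γ)^[m] ∅) ts ∧ ts g.target = t)
  | _, _ => ∅

lemma countable_positionWitnesses (T : Set (Trace α)) (s : Prefix α × LfpFormula α)
    (l : List (Trace α)) : (positionWitnesses T s l).Countable := by
  unfold positionWitnesses
  split
  · exact Set.countable_singleton _
  · exact Set.countable_iUnion fun _ => (Set.finite_range _).countable
  · exact Set.countable_empty

/-- The empty trace is the initial value of every trace variable. -/
noncomputable def skolemSet (T : Set (Trace α)) (φ : LfpFormula α) (l : List (Trace α)) :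
    Set (Trace α) :=
  insert (fun _ => ∅) (⋃ n, positionWitnesses T (Prefix.descend^[n] (.nil, φ)) l)

lemma countable_skolemSet (T : Set (Trace α)) (φ : LfpFormula α) (l : List (Trace α)) :
    (skolemSet T φ l).Countable :=
  (Set.countable_iUnion fun _ => countable_positionWitnesses T _ l).insert _

section Restriction

variable {T H : Set (Trace α)} {φ : LfpFormula α}

lemma positionWitnesses_subset (hH : ∀ l, (∀ x ∈ l, x ∈ H) → skolemSet T φ l ⊆ H)
    {s : Prefix α × LfpFormula α} (hs : φ.IsPosition s)
    {l : List (Trace α)} (hl : ∀ x ∈ l, x ∈ H) : positionWitnesses T s l ⊆ H := by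
  obtain ⟨n, rfl⟩ := hs
  exact (Set.subset_iUnion_of_subset n subset_rfl).trans ((Set.subset_insert _ _).trans (hH l hl))

theorem sat_inter_of_isPosition (hH : ∀ l, (∀ x ∈ l, x ∈ H) → skolemSet T φ l ⊆ H)
    (ψ : LfpFormula α) (hψ : ψ.XaFree) (p : Prefix α) (l : List (Trace α))
    (hpos : φ.IsPosition (p, ψ)) (hl : ∀ x ∈ l, x ∈ H)
    (hΓ : IsRestriction H (p.assign (initAssign T) l) (p.assign (initAssign (T ∩ H)) l))
    (hsat : ψ.sat (p.assign (initAssign T) l)) : ψ.sat (p.assign (initAssign (T ∩ H)) l) := by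
  induction ψ generalizing p l with
  | qf χ => simpa only [LfpFormula.sat, hΓ.tr_eq] using hsat
  | existsTrace π X ψ ih =>
    set Γ := p.assign (initAssign T) l
    have hwit := Classical.epsilon_spec (p := fun t => t ∈ Γ.so X ∧ ψ.sat (Γ.updTr π t)) hsat
    have hwitH := positionWitnesses_subset hH hpos hl rfl
    refine ⟨_, by rw [hΓ.so_eq X hψ.1]; exact ⟨hwit.1, hwitH⟩, ?_⟩
    exact ih hψ.2 (.trace π p) (_ :: l) hpos.descend (List.forall_mem_cons.2 ⟨hwitH, hl⟩)
      (hΓ.updTr π hwitH) hwit.2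
  | forallTrace π X ψ ih =>
    intro t ht
    rw [hΓ.so_eq X hψ.1] at ht
    exact ih hψ.2 (.trace π p) (t :: l) hpos.descend (List.forall_mem_cons.2 ⟨ht.2, hl⟩)
      (hΓ.updTr π ht.2) (hsat t ht.1)
  | fix Y g ψ ih =>
    have hlfp : g.lfp Y (p.assign (initAssign (T ∩ H)) l) =
        g.lfp Y (p.assign (initAssign T) l) ∩ H := by
      refine LfpGuard.lfp_inter hΓ hψ.1 fun m ts hts htH => ?_
      have hwit := Classical.epsilon_spec
        (p := fun ts' => g.IsDerivation Y _ _ ts' ∧ ts' g.target = ts g.target) ⟨ts, hts, rfl⟩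
      refine ⟨_, hwit.1, fun i => ?_, hwit.2⟩
      exact positionWitnesses_subset hH hpos (List.forall_mem_cons.2 ⟨htH, hl⟩)
        (Set.mem_iUnion.2 ⟨m, i, rfl⟩)
    exact ih hψ.2 (.fix Y g p) l hpos.descend hl (hΓ.updSo Y hlfp) hsat

end Restriction

theorem LfpModels.exists_countable_subset {φ : LfpFormula α} (hφ : φ.XaFree)
    {T : Set (Trace α)} (hT : LfpModels T φ) :
    ∃ R ⊆ T, R.Countable ∧ LfpModels R φ := by
  obtain ⟨H, hHc, hH⟩ := exists_countable_closed (skolemSet T φ) (countable_skolemSet T φ)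
  have hempty : (fun _ => ∅ : Trace α) ∈ H := hH [] (by simp) (Set.mem_insert _ _)
  refine ⟨T ∩ H, Set.inter_subset_left, hHc.mono Set.inter_subset_right, ?_⟩
  exact sat_inter_of_isPosition hH φ hφ .nil [] ⟨0, rfl⟩ (by simp)
    (IsRestriction.initAssign hempty) hT

theorem lfp_xafree_countable_model_general (AP : Type)
    (φ : LfpFormula AP) (hXa : φ.XaFree) :
    ((∃ T : Set (Trace AP), LfpModels T φ) →
        ∃ T : Set (Trace AP), T.Countable ∧ LfpModels T φ) ∧
    (∀ T : Set (Trace AP), LfpModels T φ →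
        ∃ R : Set (Trace AP), R ⊆ T ∧ R.Countable ∧ LfpModels R φ) := by
  refine ⟨fun ⟨T, hT⟩ => ?_, fun T hT => hT.exists_countable_subset hXa⟩
  obtain ⟨R, -, hR, hRφ⟩ := hT.exists_countable_subset hXa
  exact ⟨R, hR, hRφ⟩

/-- Every satisfiable `Xₐ`-free lfp-Hyper²LTL_mm sentence has a countable
model; in fact, every model `T` of such a sentence contains a countable subset `R ⊆ T`
that is also a model of the sentence. -/
theorem lfp_xafree_countable_model (AP : Type) [Fintype AP] [Nonempty AP]
    (φ : LfpFormula AP) (hφ : φ.IsSentence) (hXa : φ.XaFree) :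
    ((∃ T : Set (Trace AP), LfpModels T φ) →
        ∃ T : Set (Trace AP), T.Countable ∧ LfpModels T φ) ∧
    (∀ T : Set (Trace AP), LfpModels T φ →
        ∃ R : Set (Trace AP), R ⊆ T ∧ R.Countable ∧ LfpModels R φ) :=
  lfp_xafree_countable_model_general AP φ hXa

end Hyper2
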